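/- arXiv:2603.23570 — 3 statements merged into one kernel-verified Lean document; each statement's English description precedes it below -/
import Mathlib

section
/- Main divisibility obstruction: Let F : A^{Z^d} → A^{Z^d} commute with all shifts, and let φ_F : A → A be the induced map on constant configurations. Let g_F be the gcd of the cycle lengths of φ_F (the lengths of cycles in the eventually-periodic structure of φ_F). If there exists a map π : A^{Z^d} → (Z/qZ)^{Z^k} with π ∘ F = C_q ∘ π, then q divides g_F. -/
def clock (q k : ℕ) : ((Fin k → ℤ) → ZMod q) → ((Fin k → ℤ) → ZMod q) :=
  fun x v => x v + 1

def shift {A : Type*} {d : ℕ} (v : Fin d → ℤ) :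
    ((Fin d → ℤ) → A) → ((Fin d → ℤ) → A) :=
  fun x w => x (w + v)

theorem main_divisibility {A : Type*} [Fintype A] [Nonempty A] (q d k : ℕ)
    (hq : 2 ≤ q) (hd : 1 ≤ d) (hk : 1 ≤ k)
    (F : ((Fin d → ℤ) → A) → ((Fin d → ℤ) → A))
    (hF : ∀ v : Fin d → ℤ, F ∘ shift v = shift v ∘ F)
    (φ : A → A) (hφ : ∀ a : A, F (fun _ => a) = fun _ => φ a)
    (π : ((Fin d → ℤ) → A) → ((Fin k → ℤ) → ZMod q))
    (hπ : π ∘ F = clock q k ∘ π) :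
    q ∣ (Finset.univ.filter (fun a : A => 0 < Function.minimalPeriod φ a)).gcd
          (Function.minimalPeriod φ) := by
  apply Finset.dvd_gcd
  intro a ha
  simp only [Finset.mem_filter] at ha
  have hper : φ^[Function.minimalPeriod φ a] a = a :=
    Function.isPeriodicPt_minimalPeriod φ a
  set m := Function.minimalPeriod φ a with hm
  -- F^[n] (const a) = const (φ^[n] a)
  have hFn : ∀ n : ℕ, F^[n] (fun _ => a) = fun _ => φ^[n] a := by
    intro n
    induction n with
    | zero => rfl
    | succ n ih =>
      rw [Function.iterate_succ_apply', ih, hφ, Function.iterate_succ_apply']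
  -- π ∘ F^[n] = clock^[n] ∘ π
  have hπn : ∀ n (x : (Fin d → ℤ) → A), π (F^[n] x) = (clock q k)^[n] (π x) := by
    intro n
    induction n with
    | zero => intro x; rfl
    | succ n ih =>
      intro x
      rw [Function.iterate_succ_apply', Function.iterate_succ_apply']
      have := congrFun hπ (F^[n] x)
      simp only [Function.comp_apply] at this
      rw [this, ih]
  -- clock^[n] x v = x v + n
  have hclock : ∀ n (x : (Fin k → ℤ) → ZMod q) (v : Fin k → ℤ),
      (clock q k)^[n] x v = x v + n := by
    intro n
    induction n with
    | zero => intro x v; simp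
    | succ n ih =>
      intro x v
      rw [Function.iterate_succ_apply']
      simp [clock, ih, add_assoc]
  have key : π (F^[m] (fun _ => a)) = π (fun _ => a) := by
    rw [hFn, hper]
  rw [hπn] at key
  have := congrFun key 0
  rw [hclock] at this
  have hm0 : (m : ZMod q) = 0 := by
    have := add_left_cancel (a := π (fun _ => a) 0)
      (b := (m : ZMod q)) (c := 0) (by rw [add_zero]; exact this)
    exact this
  exact (ZMod.natCast_eq_zero_iff m q).mp hm0
end

section
/- No weakly factor-universal cellular automaton exists: for every shift-commuting map F : A^{Z^d} → A^{Z^d} with A a nonempty finite set, there exist q ≥ 2 and k ≥ 1 such that there is no surjective map π : A^{Z^d} → (Z/qZ)^{Z^k} with π ∘ F = C_q ∘ π. -/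
theorem no_weakly_factor_universal {A : Type*} [Finite A] [Nonempty A] (d : ℕ) (hd : 1 ≤ d)
    (F : ((Fin d → ℤ) → A) → ((Fin d → ℤ) → A))
    (hF : ∀ v : Fin d → ℤ, F ∘ shift v = shift v ∘ F) :
    ∃ (q k : ℕ), 2 ≤ q ∧ 1 ≤ k ∧
      ¬ ∃ π : ((Fin d → ℤ) → A) → ((Fin k → ℤ) → ZMod q),
          Function.Surjective π ∧ π ∘ F = clock q k ∘ π := by
  classical
  -- F maps constant configurations to constant configurations
  set g : A → A := fun a => F (fun _ => a) 0 with hg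
  have hFc : ∀ a : A, F (fun _ => a) = fun _ => g a := by
    intro a
    funext w
    have h := congrFun (congrFun (hF w) (fun _ => a)) 0
    simp only [Function.comp_apply, shift, zero_add] at h
    exact h.symm
  have hFn : ∀ (n : ℕ) (a : A), F^[n] (fun _ => a) = fun _ => g^[n] a := by
    intro n
    induction n with
    | zero => intro a; simp
    | succ n ih =>
      intro a
      rw [Function.iterate_succ_apply, hFc, ih, Function.iterate_succ_apply]
  -- pigeonhole: g has a periodic point
  obtain ⟨a₀⟩ := (inferInstance : Nonempty A)
  obtain ⟨i, j, hij, heq⟩ :=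
    Finite.exists_ne_map_eq_of_infinite (fun n : ℕ => g^[n] a₀)
  wlog hlt : i < j generalizing i j
  · exact this j i hij.symm heq.symm (by omega)
  set p := j - i with hp
  have hp1 : 1 ≤ p := by omega
  set a := g^[i] a₀ with ha
  have hper : g^[p] a = a := by
    have : g^[p + i] a₀ = g^[j] a₀ := by congr 1; omega
    rw [Function.iterate_add_apply] at this
    rw [ha, this, ← heq]
  refine ⟨p + 1, 1, by omega, le_refl 1, ?_⟩
  rintro ⟨π, -, hcomm⟩
  have hiter : ∀ (n : ℕ) (x), π (F^[n] x) = (clock (p+1) 1)^[n] (π x) := by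
    intro n
    induction n with
    | zero => intro x; simp
    | succ n ih =>
      intro x
      rw [Function.iterate_succ_apply', Function.iterate_succ_apply',
        ← ih x, ← Function.comp_apply (f := π) (g := F), hcomm]
      rfl
  have hclock : ∀ (n : ℕ) (z : (Fin 1 → ℤ) → ZMod (p+1)) (v),
      (clock (p+1) 1)^[n] z v = z v + n := by
    intro n
    induction n with
    | zero => intro z v; simp
    | succ n ih =>
      intro z v
      rw [Function.iterate_succ_apply', clock, ih]
      push_cast
      ring
  have hx : F^[p] (fun _ => a) = (fun _ => a) := by rw [hFn, hper]
  have h0 := hiter p (fun _ => a)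
  rw [hx] at h0
  have h1 := congrFun h0 0
  rw [hclock] at h1
  have h2 : ((p : ZMod (p+1))) = 0 := by
    have := left_eq_add.mp h1
    exact this
  have h3 : (p + 1) ∣ p := (ZMod.natCast_eq_zero_iff p (p+1)).mp h2
  have := Nat.le_of_dvd hp1 h3
  omega
end

section
/- For every positive integer g there exists a prime q not dividing g; consequently, for every shift-commuting F : A^{Z^d} → A^{Z^d} with induced gcd-of-cycle-lengths g_F, there is a prime q such that for every k ≥ 1 no map π : A^{Z^d} → (Z/qZ)^{Z^k} satisfies π ∘ F = C_q ∘ π. -/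
lemma clock_iterate (q k : ℕ) (n : ℕ) (y : (Fin k → ℤ) → ZMod q) (v : Fin k → ℤ) :
    (clock q k)^[n] y v = y v + n := by
  induction n generalizing y with
  | zero => simp
  | succ n ih =>
    rw [Function.iterate_succ_apply, ih]
    simp [clock]
    ring

lemma exists_periodic {A : Type*} [Fintype A] [Nonempty A] (φ : A → A) :
    ∃ a : A, 0 < Function.minimalPeriod φ a := by
  obtain ⟨a0⟩ := (inferInstance : Nonempty A)
  obtain ⟨m, n, hmn, h⟩ := Finite.exists_ne_map_eq_of_infinite (fun n : ℕ => φ^[n] a0)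
  wlog hlt : m < n generalizing m n
  · exact this n m hmn.symm h.symm (by omega)
  refine ⟨φ^[m] a0, ?_⟩
  have hper : Function.IsPeriodicPt φ (n - m) (φ^[m] a0) := by
    show φ^[n - m] (φ^[m] a0) = φ^[m] a0
    rw [← Function.iterate_add_apply]
    rw [Nat.sub_add_cancel hlt.le]
    exact h.symm
  exact hper.minimalPeriod_pos (by omega)

theorem prime_obstruction {A : Type*} [Fintype A] [Nonempty A] (d : ℕ) (hd : 1 ≤ d)
    (F : ((Fin d → ℤ) → A) → ((Fin d → ℤ) → A))
    (hF : ∀ v : Fin d → ℤ, F ∘ shift v = shift v ∘ F)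
    (φ : A → A) (hφ : ∀ a : A, F (fun _ => a) = fun _ => φ a) :
    (∀ g : ℕ, 0 < g → ∃ p : ℕ, p.Prime ∧ ¬ p ∣ g) ∧
    ∃ q : ℕ, q.Prime ∧
      ¬ q ∣ (Finset.univ.filter (fun a : A => 0 < Function.minimalPeriod φ a)).gcd
              (Function.minimalPeriod φ) ∧
      ∀ k : ℕ, 1 ≤ k →
        ¬ ∃ π : ((Fin d → ℤ) → A) → ((Fin k → ℤ) → ZMod q),
            π ∘ F = clock q k ∘ π := by
  have hmain : ∀ g : ℕ, 0 < g → ∃ p : ℕ, p.Prime ∧ ¬ p ∣ g := by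
    intro g hg
    obtain ⟨p, hpg, hp⟩ := Nat.exists_infinite_primes (g + 1)
    exact ⟨p, hp, fun hdvd => by
      have := Nat.le_of_dvd hg hdvd; omega⟩
  refine ⟨hmain, ?_⟩
  set S := Finset.univ.filter (fun a : A => 0 < Function.minimalPeriod φ a) with hS
  have hgpos : 0 < S.gcd (Function.minimalPeriod φ) := by
    obtain ⟨a, ha⟩ := exists_periodic φ
    have haS : a ∈ S := by simp [hS, ha]
    rcases Nat.eq_zero_or_pos (S.gcd (Function.minimalPeriod φ)) with h0 | h
    · exfalso
      have := Finset.gcd_eq_zero_iff.mp h0 a haS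
      omega
    · exact h
  obtain ⟨q, hq, hqdvd⟩ := hmain _ hgpos
  refine ⟨q, hq, hqdvd, ?_⟩
  intro k hk ⟨π, hπ⟩
  -- find a with q not dividing its minimal period
  have : ∃ a ∈ S, ¬ q ∣ Function.minimalPeriod φ a := by
    by_contra hcon
    push_neg at hcon
    exact hqdvd (Finset.dvd_gcd hcon)
  obtain ⟨a, haS, hqa⟩ := this
  set n := Function.minimalPeriod φ a with hn
  have hnpos : 0 < n := by simpa [hS] using haS
  have hφn : φ^[n] a = a := Function.iterate_minimalPeriod
  -- F iterates on constants
  have hFn : ∀ m : ℕ, F^[m] (fun _ => a) = fun _ => φ^[m] a := by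
    intro m
    induction m with
    | zero => rfl
    | succ m ih =>
      rw [Function.iterate_succ_apply', ih, hφ, Function.iterate_succ_apply']
  have hfix : F^[n] (fun _ => a) = fun _ => a := by rw [hFn, hφn]
  -- π semiconjugates iterates
  have hπn : ∀ (m : ℕ) (x), π (F^[m] x) = (clock q k)^[m] (π x) := by
    intro m
    induction m with
    | zero => intro x; rfl
    | succ m ih =>
      intro x
      rw [Function.iterate_succ_apply, ih, Function.iterate_succ_apply]
      congr 1
      exact congrFun hπ x
  have key := hπn n (fun _ => a)
  rw [hfix] at key
  have := congrFun key (fun _ => 0)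
  rw [clock_iterate] at this
  have hzero : (n : ZMod q) = 0 := left_eq_add.mp this
  haveI : NeZero q := ⟨hq.pos.ne'⟩
  exact hqa ((ZMod.natCast_eq_zero_iff n q).mp hzero)
end
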